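/- arXiv:2006.09893 — 2 statements merged into one kernel-verified Lean document; each statement's English description precedes it below -/
import Mathlib

section
/- Let ν ≥ 0, α > 0 and let f be continuous on (0,∞) with compact support contained in (0,∞). Then for every x > 0, (IB^α_{ν,−} f)(x) = 2^{−2α} · (J^{2α, (ν−1)/2−α, −α} g)(x²), where g(t) = t^{(ν−1)/2} f(√t); that is, the fractional Bessel integral on the half-line is expressed through the Saigo fractional integral. -/
open MeasureTheory Set

/-- The Gauss hypergeometric function `₂F₁(a,b;c;z)` defined by its power series. -/
noncomputable def hyp2F1 (a b c z : ℝ) : ℝ :=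
  ∑' k : ℕ, ((ascPochhammer ℝ k).eval a * (ascPochhammer ℝ k).eval b /
    ((ascPochhammer ℝ k).eval c * (k.factorial : ℝ))) * z ^ k

/-- The fractional Bessel integral on the half-line `IB^α_{ν,-}`. -/
noncomputable def besselFracInt (ν α : ℝ) (f : ℝ → ℝ) (x : ℝ) : ℝ :=
  (1 / Real.Gamma (2 * α)) * ∫ y in Set.Ioi x,
    ((y^2 - x^2) / (2 * y)) ^ (2 * α - 1) *
      hyp2F1 (α + (ν - 1) / 2) α (2 * α) (1 - x^2 / y^2) * f y

/-- The Saigo fractional integral `J^{γ,β,η}`. -/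
noncomputable def saigoFracInt (γ β η : ℝ) (h : ℝ → ℝ) (x : ℝ) : ℝ :=
  (1 / Real.Gamma γ) * ∫ t in Set.Ioi x,
    (t - x) ^ (γ - 1) * t ^ (-γ - β) * hyp2F1 (γ + β) (-η) γ (1 - x / t) * h t

/- Substitute `t = y²` in the Saigo integral with `γ = 2α`, `β = (ν-1)/2 - α`, `η = -α`.
The Jacobian `2y` and the powers `t^{-γ-β} · t^{(ν-1)/2} = y^{-2α}` recombine into
`2^{2α} ((y²-x²)/(2y))^{2α-1}`, and the hypergeometric parameters agree because
`γ + β = α + (ν-1)/2` and `-η = α`. -/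

open Real

theorem integral_Ioi_sq_comp {E : Type*} [NormedAddCommGroup E] [NormedSpace ℝ E]
    (g : ℝ → E) {a : ℝ} (ha : 0 ≤ a) :
    ∫ y in Ioi a, (2 * y) • g (y ^ 2) = ∫ t in Ioi (a ^ 2), g t := by
  have h := integral_comp_rpow_Ioi_of_pos' (g := g) two_pos (sq_nonneg a)
  rw [← rpow_two, ← rpow_mul ha, mul_inv_cancel₀ two_ne_zero, rpow_one] at h
  norm_num [rpow_two] at h
  exact h

theorem two_rpow_mul_div_two_mul_rpow {u y : ℝ} (hu : 0 ≤ u) (hy : 0 < y) (γ : ℝ) :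
    2 ^ γ * (u / (2 * y)) ^ (γ - 1) = 2 * y * (u ^ (γ - 1) * y ^ (-γ)) := by
  rw [div_rpow hu (by positivity), mul_rpow zero_le_two hy.le, rpow_sub_one two_ne_zero,
    rpow_sub_one hy.ne', rpow_neg hy.le]
  field_simp

theorem two_mul_saigo_integrand_sq (ν α : ℝ) (f : ℝ → ℝ) {x y : ℝ} (hx : 0 ≤ x) (hxy : x < y) :
    (2 * y) • ((y ^ 2 - x ^ 2) ^ (2 * α - 1) * (y ^ 2) ^ (-(2 * α) - ((ν - 1) / 2 - α)) *
      hyp2F1 (2 * α + ((ν - 1) / 2 - α)) (-(-α)) (2 * α) (1 - x ^ 2 / y ^ 2) *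
      ((y ^ 2) ^ ((ν - 1) / 2) * f (√(y ^ 2)))) =
    2 ^ (2 * α) * (((y ^ 2 - x ^ 2) / (2 * y)) ^ (2 * α - 1) *
      hyp2F1 (α + (ν - 1) / 2) α (2 * α) (1 - x ^ 2 / y ^ 2) * f y) := by
  have hy : 0 < y := hx.trans_lt hxy
  have hu : 0 ≤ y ^ 2 - x ^ 2 := by nlinarith
  have hpow : (y ^ 2) ^ (-(2 * α) - ((ν - 1) / 2 - α)) * (y ^ 2) ^ ((ν - 1) / 2)
      = y ^ (-(2 * α)) := by
    rw [← rpow_add (by positivity), ← rpow_natCast_mul hy.le]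
    congr 1
    push_cast
    ring
  calc _ = 2 * y * ((y ^ 2 - x ^ 2) ^ (2 * α - 1) * y ^ (-(2 * α))) *
        (hyp2F1 (α + (ν - 1) / 2) α (2 * α) (1 - x ^ 2 / y ^ 2) * f y) := by
        rw [← hpow, sqrt_sq hy.le, smul_eq_mul, neg_neg,
          show 2 * α + ((ν - 1) / 2 - α) = α + (ν - 1) / 2 by ring]
        ring
    _ = _ := by rw [← two_rpow_mul_div_two_mul_rpow hu hy]; ring

theorem besselFracInt_eq_saigo_general (ν α : ℝ)
    (f : ℝ → ℝ) :
    ∀ x > (0:ℝ),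
      besselFracInt ν α f x =
        (2:ℝ) ^ (-(2 * α)) *
          saigoFracInt (2 * α) ((ν - 1) / 2 - α) (-α)
            (fun t => t ^ ((ν - 1) / 2) * f (Real.sqrt t)) (x^2) := by
  intro x hx
  unfold besselFracInt saigoFracInt
  rw [← integral_Ioi_sq_comp _ hx.le,
    setIntegral_congr_fun measurableSet_Ioi fun y hy => two_mul_saigo_integrand_sq ν α f hx.le hy,
    integral_const_mul, rpow_neg zero_le_two]
  field_simp

/-- The fractional Bessel integral on the half-line is expressed through the Saigo
fractional integral: `IB^α_{ν,-} f (x) = 2^{-2α} J^{2α,(ν-1)/2-α,-α} g (x²)` with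
`g(t) = t^{(ν-1)/2} f(√t)`. -/
theorem besselFracInt_eq_saigo (ν α : ℝ) (hν : 0 ≤ ν) (hα : 0 < α)
    (f : ℝ → ℝ) (hf : ContinuousOn f (Set.Ioi 0)) (hsupp : HasCompactSupport f)
    (hpos : tsupport f ⊆ Set.Ioi 0) :
    ∀ x > (0:ℝ),
      besselFracInt ν α f x =
        (2:ℝ) ^ (-(2 * α)) *
          saigoFracInt (2 * α) ((ν - 1) / 2 - α) (-α)
            (fun t => t ^ ((ν - 1) / 2) * f (Real.sqrt t)) (x^2) :=
  besselFracInt_eq_saigo_general ν α f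
end

section
/- Let ν ≥ 0 and let g be twice continuously differentiable on (0,∞) with g(y) = 0 for all sufficiently large y. Then the fractional Bessel integral of order 1 inverts the Bessel operator: for every x > 0, (IB^1_{ν,−}(B_ν g))(x) = ∫_x^∞ ((y²−x²)/(2y)) · ₂F₁((ν+1)/2, 1; 2; 1−x²/y²) · (g''(y) + (ν/y) g'(y)) dy = g(x). -/
open MeasureTheory Set

/-- The Bessel operator `B_ν g = g'' + (ν/x) g'`. -/
noncomputable def besselOp (ν : ℝ) (g : ℝ → ℝ) : ℝ → ℝ :=
  fun x => deriv (deriv g) x + (ν / x) * deriv g x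

/-
For `b = 1`, `c = 2` the hypergeometric series is, up to the factor `z`, an antiderivative of the
binomial series of `(1 - z)^(-a)`, so `(a - 1) z ₂F₁(a, 1; 2; z) = (1 - z)^(1 - a) - 1` and
`z ₂F₁(1, 1; 2; z) = -log (1 - z)`. This evaluates the kernel of `IB^1_{ν,-}` in closed form:
`((y² - x²)/(2y)) ₂F₁((ν+1)/2, 1; 2; 1 - x²/y²) = y^ν ψ(y)` with `ψ(y) = ∫_x^y t^(-ν) dt`
(after the substitution `t = y s` this is a one-variable identity in `r = x/y`).
Since `y^ν B_ν g = (y^ν g')'`, integrating by parts against `ψ`, which vanishes at `x` and has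
`ψ' = y^(-ν)`, leaves `-∫_x^∞ g' = g x`.
-/

open Filter

lemma Ring.choose_add_sub_one_eq_ascPochhammer_div (b : ℝ) (n : ℕ) :
    Ring.choose (b + n - 1) n = (ascPochhammer ℝ n).eval b / n.factorial := by
  rw [Ring.choose_eq_smul, Polynomial.descPochhammer_smeval_eq_ascPochhammer,
    Polynomial.ascPochhammer_smeval_eq_eval, smul_eq_mul, inv_mul_eq_div]
  ring_nf

lemma hasSum_ascPochhammer_div_factorial_mul_pow (b : ℝ) {z : ℝ} (hz : |z| < 1) :
    HasSum (fun n : ℕ => (ascPochhammer ℝ n).eval b / n.factorial * z ^ n) ((1 - z) ^ (-b)) := by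
  have h := (Real.one_div_one_sub_rpow_hasFPowerSeriesOnBall_zero b).hasSum
    (y := z) (by simpa [enorm_eq_nnnorm, ← NNReal.coe_lt_coe] using hz)
  simp only [FormalMultilinearSeries.ofScalars_apply_eq,
    Ring.choose_add_sub_one_eq_ascPochhammer_div, smul_eq_mul, zero_add] at h
  rwa [one_div, ← Real.rpow_neg (by linarith [le_abs_self z])] at h

lemma hyp2F1_one_two_eq_tsum (a z : ℝ) :
    hyp2F1 a 1 2 z = ∑' k : ℕ, (ascPochhammer ℝ k).eval a / (k + 1).factorial * z ^ k := by
  refine tsum_congr fun k => ?_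
  have h2 : (ascPochhammer ℝ k).eval (2 : ℝ) = (k + 1).factorial := by
    simpa [one_add_one_eq_two, add_comm] using factorial_mul_ascPochhammer ℝ 1 k
  rw [ascPochhammer_eval_one, h2, mul_comm ((k + 1).factorial : ℝ)]
  field_simp

lemma sub_one_mul_hyp2F1_one_two (a : ℝ) {z : ℝ} (hz : |z| < 1) :
    (a - 1) * z * hyp2F1 a 1 2 z = (1 - z) ^ (1 - a) - 1 := by
  have h := (hasSum_nat_add_iff' 1).mpr (hasSum_ascPochhammer_div_factorial_mul_pow (a - 1) hz)
  simp only [neg_sub, Finset.range_one, Finset.sum_singleton, ascPochhammer_zero,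
    Polynomial.eval_one, Nat.factorial_zero, Nat.cast_one, div_one, pow_zero, mul_one] at h
  rw [hyp2F1_one_two_eq_tsum, ← tsum_mul_left, ← h.tsum_eq]
  refine tsum_congr fun k => ?_
  rw [ascPochhammer_succ_left]
  simp only [Polynomial.eval_mul, Polynomial.eval_X, Polynomial.eval_comp, Polynomial.eval_add,
    Polynomial.eval_one, sub_add_cancel, pow_succ]
  ring

lemma mul_hyp2F1_one_one_two {z : ℝ} (hz : |z| < 1) :
    z * hyp2F1 1 1 2 z = -Real.log (1 - z) := by
  rw [hyp2F1_one_two_eq_tsum, ← tsum_mul_left,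
    ← (Real.hasSum_pow_div_log_of_abs_lt_one hz).tsum_eq]
  refine tsum_congr fun k => ?_
  rw [ascPochhammer_eval_one, Nat.factorial_succ, pow_succ]
  have := Nat.factorial_pos k
  push_cast
  field_simp

lemma integral_rpow_neg_eq_hyp2F1 (ν : ℝ) {r : ℝ} (hr0 : 0 < r) (hr1 : r < 1) :
    ∫ t in r..1, t ^ (-ν) = (1 - r ^ 2) / 2 * hyp2F1 ((ν + 1) / 2) 1 2 (1 - r ^ 2) := by
  have hz : |1 - r ^ 2| < 1 := by
    rw [abs_lt]; constructor <;> nlinarith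
  by_cases hν : ν = 1
  · subst hν
    have h := mul_hyp2F1_one_one_two hz
    rw [sub_sub_cancel, Real.log_pow, Nat.cast_two] at h
    simp only [Real.rpow_neg_one, integral_inv_of_pos hr0 one_pos, one_div, Real.log_inv]
    rw [one_add_one_eq_two, div_self two_ne_zero]
    linear_combination -h / 2
  · have h := sub_one_mul_hyp2F1_one_two ((ν + 1) / 2) hz
    have hsq : (r ^ 2) ^ (1 - (ν + 1) / 2) = r ^ (1 - ν) := by
      rw [← Real.rpow_natCast, ← Real.rpow_mul hr0.le]; ring_nf
    rw [sub_sub_cancel, hsq] at h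
    have hν' : -ν ≠ -1 := fun h => hν (neg_injective h)
    have h0 : (0 : ℝ) ∉ uIcc r 1 := by simp [uIcc_of_le hr1.le, hr0.not_ge]
    rw [integral_rpow (Or.inr ⟨hν', h0⟩), Real.one_rpow, neg_add_eq_sub]
    have : (1 : ℝ) - ν ≠ 0 := sub_ne_zero.mpr (Ne.symm hν)
    field_simp
    linear_combination 2 * h

lemma rpow_mul_integral_rpow_neg {ν x y : ℝ} (hx : 0 < x) (hxy : x < y) :
    y ^ ν * ∫ t in x..y, t ^ (-ν) = y * ∫ s in x / y..1, s ^ (-ν) := by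
  have hy : 0 < y := hx.trans hxy
  have hscale : ∫ s in x / y..1, (y * s) ^ (-ν) = y⁻¹ * ∫ t in x..y, t ^ (-ν) := by
    rw [intervalIntegral.integral_comp_mul_left (fun t => t ^ (-ν)) hy.ne',
      mul_div_cancel₀ _ hy.ne', mul_one, smul_eq_mul]
  have hsplit : ∫ s in x / y..1, (y * s) ^ (-ν) = y ^ (-ν) * ∫ s in x / y..1, s ^ (-ν) := by
    rw [← intervalIntegral.integral_const_mul]
    refine intervalIntegral.integral_congr fun s hs => ?_
    have : 0 ≤ s := by
      rw [uIcc_of_le ((div_lt_one hy).mpr hxy).le] at hs; exact (div_pos hx hy).le.trans hs.1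
    exact Real.mul_rpow hy.le this
  rw [hsplit, Real.rpow_neg hy.le] at hscale
  field_simp at hscale
  rw [← hscale]

lemma besselFracInt_one_kernel_eq {ν x y : ℝ} (hx : 0 < x) (hxy : x < y) :
    (y ^ 2 - x ^ 2) / (2 * y) * hyp2F1 ((ν + 1) / 2) 1 2 (1 - x ^ 2 / y ^ 2) =
      y ^ ν * ∫ t in x..y, t ^ (-ν) := by
  have hy : 0 < y := hx.trans hxy
  rw [rpow_mul_integral_rpow_neg hx hxy,
    integral_rpow_neg_eq_hyp2F1 ν (div_pos hx hy) ((div_lt_one hy).mpr hxy), div_pow]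
  field_simp

lemma deriv_eq_zero_of_forall_gt {f : ℝ → ℝ} {M y : ℝ} (hf : ∀ t > M, f t = 0) (hy : M < y) :
    deriv f y = 0 := by
  rw [(eventuallyEq_of_mem (Ioi_mem_nhds hy) hf : f =ᶠ[nhds y] fun _ => 0).deriv_eq, deriv_const]

lemma ContDiffOn.continuousOn_besselOp {g : ℝ → ℝ} (hg : ContDiffOn ℝ 2 g (Ioi 0)) (ν : ℝ) :
    ContinuousOn (besselOp ν g) (Ioi 0) := by
  have hg' : ContDiffOn ℝ 1 (deriv g) (Ioi 0) := hg.deriv_of_isOpen isOpen_Ioi (by norm_num)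
  exact (hg'.continuousOn_deriv_of_isOpen isOpen_Ioi le_rfl).add
    ((continuousOn_const.div continuousOn_id fun y hy => (mem_Ioi.mp hy).ne').mul hg'.continuousOn)

lemma hasDerivAt_rpow_mul_deriv {g : ℝ → ℝ} {y : ℝ} (hy : 0 < y)
    (hg : DifferentiableAt ℝ (deriv g) y) (ν : ℝ) :
    HasDerivAt (fun t => t ^ ν * deriv g t) (y ^ ν * besselOp ν g y) y := by
  refine ((Real.hasDerivAt_rpow_const (p := ν) (Or.inl hy.ne')).mul hg.hasDerivAt).congr_deriv ?_
  simp only [besselOp, Real.rpow_sub_one hy.ne']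
  ring

lemma hasDerivAt_integral_rpow {x y : ℝ} (hx : 0 < x) (hy : 0 < y) (p : ℝ) :
    HasDerivAt (fun b => ∫ t in x..b, t ^ p) (y ^ p) y := by
  have hcont : ContinuousOn (fun t : ℝ => t ^ p) (Ioi 0) :=
    fun t ht => (Real.continuousAt_rpow_const t p (Or.inl (mem_Ioi.mp ht).ne')).continuousWithinAt
  refine intervalIntegral.integral_hasDerivAt_right ?_
    (hcont.stronglyMeasurableAtFilter isOpen_Ioi y hy) (hcont.continuousAt (Ioi_mem_nhds hy))
  exact intervalIntegral.intervalIntegrable_rpow (Or.inr fun h => (lt_min hx hy).not_ge h.1)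

theorem integral_rpow_mul_integral_rpow_neg_mul_besselOp {ν x : ℝ} (hx : 0 < x) {g : ℝ → ℝ}
    (hg : ContDiffOn ℝ 2 g (Ioi 0)) {M : ℝ} (hM : ∀ y ≥ M, g y = 0) :
    ∫ y in Ioi x, y ^ ν * (∫ t in x..y, t ^ (-ν)) * besselOp ν g y = g x := by
  set L := max x M + 1
  have hxL : x < L := by grind
  have hpos : ∀ y ∈ uIcc x L, 0 < y := fun y hy => by
    rw [uIcc_of_le hxL.le] at hy; exact hx.trans_le hy.1
  have hg₀ : ∀ y > M, g y = 0 := fun y hy => hM y hy.le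
  have hg₁ : ∀ y > M, deriv g y = 0 := fun y => deriv_eq_zero_of_forall_gt hg₀
  have hg₂ : ∀ y > M, deriv (deriv g) y = 0 := fun y => deriv_eq_zero_of_forall_gt hg₁
  have hg' : ContDiffOn ℝ 1 (deriv g) (Ioi 0) := hg.deriv_of_isOpen isOpen_Ioi (by norm_num)
  have hcut : ∫ y in Ioi x, y ^ ν * (∫ t in x..y, t ^ (-ν)) * besselOp ν g y =
      ∫ y in x..L, (∫ t in x..y, t ^ (-ν)) * (y ^ ν * besselOp ν g y) := by
    rw [intervalIntegral.integral_of_le hxL.le,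
      setIntegral_eq_of_subset_of_forall_sdiff_eq_zero measurableSet_Ioi Ioc_subset_Ioi_self]
    · exact setIntegral_congr_fun measurableSet_Ioc fun y _ => by ring
    · rintro y ⟨hy, hyL⟩
      have : M < y := by simp only [mem_Ioi, mem_Ioc, not_and, not_le] at hy hyL; grind
      simp [besselOp, hg₁ y this, hg₂ y this]
  rw [hcut, intervalIntegral.integral_mul_deriv_eq_deriv_mul
      (fun y hy => hasDerivAt_integral_rpow hx (hpos y hy) (-ν))
      (fun y hy => hasDerivAt_rpow_mul_deriv (hpos y hy)
        ((hg'.differentiableOn one_ne_zero).differentiableAt (Ioi_mem_nhds (hpos y hy))) ν)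
      (intervalIntegral.intervalIntegrable_rpow (Or.inr fun h => (hpos 0 h).false))
      (ContinuousOn.intervalIntegrable ?_)]
  · have hML : M < L := by grind
    have hcancel : ∫ y in x..L, y ^ (-ν) * (y ^ ν * deriv g y) = ∫ y in x..L, deriv g y :=
      intervalIntegral.integral_congr fun y hy => by
        rw [← mul_assoc, ← Real.rpow_add (hpos y hy), neg_add_cancel, Real.rpow_zero, one_mul]
    rw [intervalIntegral.integral_same, hg₁ L hML, hcancel, intervalIntegral.integral_deriv_eq_sub
      (fun y hy => (hg.differentiableOn two_ne_zero).differentiableAt (Ioi_mem_nhds (hpos y hy)))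
      (hg'.continuousOn.mono fun y hy => hpos y hy).intervalIntegrable, hg₀ L hML]
    ring
  · exact ((continuousOn_id.rpow_const fun y hy => Or.inl (mem_Ioi.mp hy).ne').mul
      (hg.continuousOn_besselOp ν)).mono fun y hy => hpos y hy

lemma besselFracInt_one (ν : ℝ) (f : ℝ → ℝ) (x : ℝ) :
    besselFracInt ν 1 f x = ∫ y in Ioi x,
      (y ^ 2 - x ^ 2) / (2 * y) * hyp2F1 ((ν + 1) / 2) 1 2 (1 - x ^ 2 / y ^ 2) * f y := by
  rw [besselFracInt, show (1 : ℝ) + (ν - 1) / 2 = (ν + 1) / 2 by ring]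
  norm_num [Real.Gamma_two]

theorem besselFracInt_one_left_inverse_general (ν : ℝ)
    (g : ℝ → ℝ) (hg : ContDiffOn ℝ 2 g (Set.Ioi 0))
    (hvanish : ∃ M : ℝ, ∀ y ≥ M, g y = 0) :
    ∀ x > (0:ℝ),
      besselFracInt ν 1 (besselOp ν g) x =
        (∫ y in Set.Ioi x, ((y^2 - x^2) / (2 * y)) *
          hyp2F1 ((ν + 1) / 2) 1 2 (1 - x^2 / y^2) *
          (deriv (deriv g) y + (ν / y) * deriv g y)) ∧
      besselFracInt ν 1 (besselOp ν g) x = g x := by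
  intro x hx
  obtain ⟨M, hM⟩ := hvanish
  have hform := besselFracInt_one ν (besselOp ν g) x
  refine ⟨hform, hform.trans ?_⟩
  rw [← integral_rpow_mul_integral_rpow_neg_mul_besselOp hx hg hM]
  exact setIntegral_congr_fun measurableSet_Ioi fun y hy => by
    rw [besselFracInt_one_kernel_eq hx hy]

/-- The fractional Bessel integral of order `1` inverts the Bessel operator. -/
theorem besselFracInt_one_left_inverse (ν : ℝ) (hν : 0 ≤ ν)
    (g : ℝ → ℝ) (hg : ContDiffOn ℝ 2 g (Set.Ioi 0))
    (hvanish : ∃ M : ℝ, ∀ y ≥ M, g y = 0) :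
    ∀ x > (0:ℝ),
      besselFracInt ν 1 (besselOp ν g) x =
        (∫ y in Set.Ioi x, ((y^2 - x^2) / (2 * y)) *
          hyp2F1 ((ν + 1) / 2) 1 2 (1 - x^2 / y^2) *
          (deriv (deriv g) y + (ν / y) * deriv g y)) ∧
      besselFracInt ν 1 (besselOp ν g) x = g x :=
  besselFracInt_one_left_inverse_general ν g hg hvanish
end
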